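/- arXiv:2410.05462 — 6 statements merged into one kernel-verified Lean document; each statement's English description precedes it below -/
import Mathlib

section
/- Let f : ℝ → ℝ be a nonnegative function, let K be an n×d real matrix, let ε > 0, and suppose the sum of the f-sensitivities of the rows of K is at most Ψ < ∞. Then there exists a set U ⊆ {1,…,n} with |U| ≤ Ψ/ε such that for every n×d real matrix Q with rows Q_1,…,Q_n and every pair of indices i, j ∈ {1,…,n} with Σ_{ℓ=1}^n f(⟨Q_i, K_ℓ⟩) > 0, if f(⟨Q_i, K_j⟩) / Σ_{ℓ=1}^n f(⟨Q_i, K_ℓ⟩) ≥ ε then j ∈ U. -/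
/-- The `f`-sensitivity of row `j` of an `n × d` real matrix `K`:
`σ^f_j(K) = sup { f(⟨K_j, y⟩) / ∑_ℓ f(⟨K_ℓ, y⟩) : y ∈ ℝ^d, ∑_ℓ f(⟨K_ℓ, y⟩) > 0 }`. -/
noncomputable def fSens {n d : ℕ} (f : ℝ → ℝ) (K : Matrix (Fin n) (Fin d) ℝ) (j : Fin n) : ℝ :=
  sSup {x : ℝ | ∃ y : Fin d → ℝ, 0 < (∑ ℓ, f (∑ i, K ℓ i * y i)) ∧
    x = f (∑ i, K j i * y i) / ∑ ℓ, f (∑ i, K ℓ i * y i)}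

lemma fSens_nonneg {n d : ℕ} (f : ℝ → ℝ) (hf : ∀ x, 0 ≤ f x)
    (K : Matrix (Fin n) (Fin d) ℝ) (j : Fin n) : 0 ≤ fSens f K j := by
  apply Real.sSup_nonneg
  rintro x ⟨y, hy, rfl⟩
  exact div_nonneg (hf _) hy.le

lemma fSens_bddAbove {n d : ℕ} (f : ℝ → ℝ) (hf : ∀ x, 0 ≤ f x)
    (K : Matrix (Fin n) (Fin d) ℝ) (j : Fin n) :
    BddAbove {x : ℝ | ∃ y : Fin d → ℝ, 0 < (∑ ℓ, f (∑ i, K ℓ i * y i)) ∧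
      x = f (∑ i, K j i * y i) / ∑ ℓ, f (∑ i, K ℓ i * y i)} := by
  refine ⟨1, ?_⟩
  rintro x ⟨y, hy, rfl⟩
  rw [div_le_one hy]
  exact Finset.single_le_sum (f := fun ℓ => f (∑ i, K ℓ i * y i)) (fun ℓ _ => hf _) (Finset.mem_univ j)

/-- If the sum of the `f`-sensitivities of the rows of `K` is at most `Ψ`, then there is a
universal set `U ⊆ [n]` of size at most `Ψ/ε` containing, for every query matrix `Q` and every
row `i`, all indices `j` whose attention score is at least `ε`. -/
theorem universal_set_of_sensitivity_sum {n d : ℕ} (f : ℝ → ℝ) (hf : ∀ x, 0 ≤ f x)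
    (K : Matrix (Fin n) (Fin d) ℝ) (ε Ψ : ℝ) (hε : 0 < ε)
    (hΨ : ∑ j, fSens f K j ≤ Ψ) :
    ∃ U : Finset (Fin n), (U.card : ℝ) ≤ Ψ / ε ∧
      ∀ (Q : Matrix (Fin n) (Fin d) ℝ) (i j : Fin n),
        0 < (∑ ℓ, f (∑ k, Q i k * K ℓ k)) →
        ε ≤ f (∑ k, Q i k * K j k) / ∑ ℓ, f (∑ k, Q i k * K ℓ k) →
        j ∈ U := by
  refine ⟨Finset.univ.filter (fun j => ε ≤ fSens f K j), ?_, ?_⟩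
  · rw [le_div_iff₀ hε]
    calc (((Finset.univ.filter (fun j => ε ≤ fSens f K j)).card : ℝ)) * ε
        = ∑ j ∈ Finset.univ.filter (fun j => ε ≤ fSens f K j), ε := by
          rw [Finset.sum_const, nsmul_eq_mul]
      _ ≤ ∑ j ∈ Finset.univ.filter (fun j => ε ≤ fSens f K j), fSens f K j :=
          Finset.sum_le_sum (fun j hj => (Finset.mem_filter.mp hj).2)
      _ ≤ ∑ j, fSens f K j :=
          Finset.sum_le_sum_of_subset_of_nonneg (Finset.filter_subset _ _)
            (fun j _ _ => fSens_nonneg f hf K j)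
      _ ≤ Ψ := hΨ
  · intro Q i j hpos hscore
    simp only [Finset.mem_filter, Finset.mem_univ, true_and]
    refine hscore.trans (le_csSup (fSens_bddAbove f hf K j) ?_)
    have h : ∀ ℓ, (∑ i', K ℓ i' * Q i i') = ∑ k, Q i k * K ℓ k := fun ℓ =>
      Finset.sum_congr rfl (fun k _ => mul_comm _ _)
    exact ⟨Q i, by simp only [h]; exact hpos, by simp only [h]⟩
end

section
/- Let d ≤ D be positive integers, let ψ, φ : ℝ^d → ℝ^D be arbitrary maps, let K be an n×d real matrix with rows K_1,…,K_n, and let ε > 0. Then there exists a set U ⊆ {1,…,n} with |U| ≤ D/ε such that for every n×d real matrix Q with rows Q_1,…,Q_n and every pair of indices i, j ∈ {1,…,n} with Σ_{ℓ=1}^n ⟨ψ(Q_i), φ(K_ℓ)⟩² > 0, if ⟨ψ(Q_i), φ(K_j)⟩² / Σ_{ℓ=1}^n ⟨ψ(Q_i), φ(K_ℓ)⟩² ≥ ε then j ∈ U. -/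
/-!
For a fixed key matrix, every score vector `y = (⟨ψ(Q_i), φ(K_ℓ)⟩)_ℓ` lies in one subspace
`S ⊆ ℝⁿ`, the range of `x ↦ (⟨x, φ(K_ℓ)⟩)_ℓ`, of dimension at most `D`. With `P` the orthogonal
projection onto `S`, the leverage scores `τ_j = ‖P e_j‖²` sum to `trace P = dim S`, and for
`y ∈ S` Cauchy–Schwarz gives `y_j² = ⟨P e_j, y⟩² ≤ τ_j ‖y‖²`. Hence every heavy index `j` has
`τ_j ≥ ε`, and there are at most `dim S / ε ≤ D / ε` such indices.
-/

open Finset Module RealInnerProductSpace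

theorem Finset.card_filter_le_nsmul_le_sum {ι M : Type*} [AddCommMonoid M] [PartialOrder M]
    [IsOrderedAddMonoid M] (s : Finset ι) (f : ι → M) (ε : M) [DecidablePred (ε ≤ f ·)]
    (hf : ∀ i ∈ s, 0 ≤ f i) :
    #{i ∈ s | ε ≤ f i} • ε ≤ ∑ i ∈ s, f i :=
  calc #{i ∈ s | ε ≤ f i} • ε ≤ ∑ i ∈ s with ε ≤ f i, f i :=
        card_nsmul_le_sum _ _ _ fun _ hi ↦ (mem_filter.mp hi).2
    _ ≤ ∑ i ∈ s, f i :=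
        sum_le_sum_of_subset_of_nonneg (filter_subset _ _) fun i hi _ ↦ hf i hi

namespace Submodule

variable {E : Type*} [NormedAddCommGroup E] [InnerProductSpace ℝ E] (K : Submodule ℝ E)

theorem norm_starProjection_sq_eq_inner [K.HasOrthogonalProjection] (v : E) :
    ‖K.starProjection v‖ ^ 2 = ⟪v, K.starProjection v⟫ := by
  rw [← real_inner_self_eq_norm_sq, inner_starProjection_left_eq_right,
    starProjection_eq_self_iff.mpr (K.starProjection_apply_mem v)]

theorem sum_norm_starProjection_sq {ι : Type*} [Fintype ι] [FiniteDimensional ℝ E]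
    (b : OrthonormalBasis ι ℝ E) :
    ∑ i, ‖K.starProjection (b i)‖ ^ 2 = finrank ℝ K := by
  have hproj : LinearMap.IsProj K (K.starProjection : E →ₗ[ℝ] E) :=
    ⟨K.starProjection_apply_mem, fun _ hx ↦ starProjection_eq_self_iff.mpr hx⟩
  simp_rw [norm_starProjection_sq_eq_inner, ← hproj.trace,
    LinearMap.trace_eq_sum_inner _ b, ContinuousLinearMap.coe_coe]

theorem sq_inner_div_norm_sq_le [K.HasOrthogonalProjection] {y : E} (hy : y ∈ K) (v : E) :
    ⟪v, y⟫ ^ 2 / ‖y‖ ^ 2 ≤ ‖K.starProjection v‖ ^ 2 := by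
  refine div_le_of_le_mul₀ (sq_nonneg _) (sq_nonneg _) ?_
  calc ⟪v, y⟫ ^ 2 = ⟪K.starProjection v, y⟫ ^ 2 := by
        rw [inner_starProjection_left_eq_right, starProjection_eq_self_iff.mpr hy]
    _ ≤ (‖K.starProjection v‖ * ‖y‖) ^ 2 := by
        rw [← sq_abs]
        gcongr
        exact abs_real_inner_le_norm _ _
    _ = ‖K.starProjection v‖ ^ 2 * ‖y‖ ^ 2 := mul_pow _ _ _

theorem exists_card_le_finrank_div_of_le_sq_apply_div_norm_sq {ι : Type*} [Fintype ι]
    (S : Submodule ℝ (EuclideanSpace ℝ ι)) {ε : ℝ} (hε : 0 < ε) :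
    ∃ U : Finset ι, (#U : ℝ) ≤ finrank ℝ S / ε ∧
      ∀ y ∈ S, ∀ j, ε ≤ y j ^ 2 / ‖y‖ ^ 2 → j ∈ U := by
  classical
  set b := EuclideanSpace.basisFun ι ℝ
  set τ : ι → ℝ := fun j ↦ ‖S.starProjection (b j)‖ ^ 2
  refine ⟨({j | ε ≤ τ j} : Finset ι), ?_, fun y hy j hj ↦ mem_filter.mpr ⟨mem_univ j, ?_⟩⟩
  · rw [le_div_iff₀ hε, ← nsmul_eq_mul, ← S.sum_norm_starProjection_sq b]
    exact card_filter_le_nsmul_le_sum univ τ ε fun _ _ ↦ sq_nonneg _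
  · calc ε ≤ y j ^ 2 / ‖y‖ ^ 2 := hj
      _ = ⟪b j, y⟫ ^ 2 / ‖y‖ ^ 2 := by rw [EuclideanSpace.basisFun_inner]
      _ ≤ τ j := S.sq_inner_div_norm_sq_le hy _

end Submodule

theorem gap_universal_set_general {n d D : ℕ}
    (ψ φ : (Fin d → ℝ) → (Fin D → ℝ))
    (K : Matrix (Fin n) (Fin d) ℝ) (ε : ℝ) (hε : 0 < ε) :
    ∃ U : Finset (Fin n), (U.card : ℝ) ≤ D / ε ∧
      ∀ (Q : Matrix (Fin n) (Fin d) ℝ) (i j : Fin n),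
        0 < (∑ ℓ, (∑ k, ψ (Q i) k * φ (K ℓ) k) ^ 2) →
        ε ≤ (∑ k, ψ (Q i) k * φ (K j) k) ^ 2 / ∑ ℓ, (∑ k, ψ (Q i) k * φ (K ℓ) k) ^ 2 →
        j ∈ U := by
  let T : (Fin D → ℝ) →ₗ[ℝ] EuclideanSpace ℝ (Fin n) :=
    (WithLp.linearEquiv 2 ℝ (Fin n → ℝ)).symm.toLinearMap ∘ₗ
      (Matrix.of fun k ℓ ↦ φ (K ℓ) k).vecMulLinear
  obtain ⟨U, hcard, hU⟩ :=
    (LinearMap.range T).exists_card_le_finrank_div_of_le_sq_apply_div_norm_sq hε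
  have hrank : (finrank ℝ (LinearMap.range T) : ℝ) ≤ D := by
    exact_mod_cast T.finrank_range_le.trans_eq (finrank_fin_fun ℝ)
  refine ⟨U, hcard.trans (div_le_div_of_nonneg_right hrank hε.le), fun Q i j _ hj ↦ ?_⟩
  refine hU (T (ψ (Q i))) (LinearMap.mem_range_self T _) j ?_
  rwa [EuclideanSpace.real_norm_sq_eq]

/-- Generalized Attention Problem (GAP): for arbitrary feature maps `ψ, φ : ℝ^d → ℝ^D` with
`d ≤ D`, there is a universal set `U ⊆ [n]` of size at most `D/ε` containing, for every query
matrix `Q` and every row `i`, all indices `j` with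
`⟨ψ(Q_i), φ(K_j)⟩² / ∑_ℓ ⟨ψ(Q_i), φ(K_ℓ)⟩² ≥ ε`. -/
theorem gap_universal_set {n d D : ℕ} (hd : 0 < d) (hdD : d ≤ D)
    (ψ φ : (Fin d → ℝ) → (Fin D → ℝ))
    (K : Matrix (Fin n) (Fin d) ℝ) (ε : ℝ) (hε : 0 < ε) :
    ∃ U : Finset (Fin n), (U.card : ℝ) ≤ D / ε ∧
      ∀ (Q : Matrix (Fin n) (Fin d) ℝ) (i j : Fin n),
        0 < (∑ ℓ, (∑ k, ψ (Q i) k * φ (K ℓ) k) ^ 2) →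
        ε ≤ (∑ k, ψ (Q i) k * φ (K j) k) ^ 2 / ∑ ℓ, (∑ k, ψ (Q i) k * φ (K ℓ) k) ^ 2 →
        j ∈ U :=
  gap_universal_set_general ψ φ K ε hε
end

section
/- Let K be an n×d real matrix with rows K_1,…,K_n and let ε > 0. For v ∈ ℝ^d define LA(K, ε, v) = { j ∈ {1,…,n} : ⟨K_j, v⟩² ≥ ε · Σ_{ℓ=1}^n ⟨K_ℓ, v⟩² }, and let U(K, ε) be the union of LA(K, ε, v) over all v ∈ ℝ^d with Kv ≠ 0. Then U(K, ε) equals the set of indices j such that the leverage score σ_j(K) is at least ε, and moreover |U(K, ε)| ≤ d/ε. -/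
/-- The leverage score of row `j` of an `n × d` real matrix `K`:
`σ_j(K) = sup { ⟨K_j, v⟩² / ∑_ℓ ⟨K_ℓ, v⟩² : v ∈ ℝ^d, Kv ≠ 0 }`. -/
noncomputable def levScore {n d : ℕ} (K : Matrix (Fin n) (Fin d) ℝ) (j : Fin n) : ℝ :=
  sSup {x : ℝ | ∃ v : Fin d → ℝ, K.mulVec v ≠ 0 ∧
    x = (∑ i, K j i * v i) ^ 2 / ∑ ℓ, (∑ i, K ℓ i * v i) ^ 2}

/-- `LA(K, ε, v)` is the set of rows `j` with `⟨K_j, v⟩² ≥ ε ∑_ℓ ⟨K_ℓ, v⟩²`. -/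
def LA {n d : ℕ} (K : Matrix (Fin n) (Fin d) ℝ) (ε : ℝ) (v : Fin d → ℝ) : Set (Fin n) :=
  {j | ε * ∑ ℓ, (∑ i, K ℓ i * v i) ^ 2 ≤ (∑ i, K j i * v i) ^ 2}

/-- `U(K, ε)` is the union of `LA(K, ε, v)` over all `v` with `Kv ≠ 0`. -/
def USet {n d : ℕ} (K : Matrix (Fin n) (Fin d) ℝ) (ε : ℝ) : Set (Fin n) :=
  ⋃ v ∈ {v : Fin d → ℝ | K.mulVec v ≠ 0}, LA K ε v

/-! Let `V ⊆ ℝⁿ` be the column space of `K` and `P` the orthogonal projection onto `V`. For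
`y = Kv ∈ V` we have `⟨K_j, v⟩ = y_j = ⟪P e_j, y⟫`, so by Cauchy–Schwarz the ratio
`y_j² / ‖y‖²` is at most `‖P e_j‖²`, with equality at `y = P e_j`: the leverage score is
`‖P e_j‖²` and the supremum is attained. This identifies `U(K, ε)` with the rows of leverage
at least `ε`. Finally `∑ⱼ ‖P e_j‖² = tr P = dim V ≤ d`, so at most `d / ε` rows have
leverage `≥ ε`. -/

open scoped RealInnerProductSpace

namespace Submodule

variable {ι : Type*} [Fintype ι] [DecidableEq ι] (V : Submodule ℝ (EuclideanSpace ℝ ι))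

noncomputable def leverage (j : ι) : ℝ :=
  ‖V.starProjection (EuclideanSpace.single j 1)‖ ^ 2

variable {V}

theorem inner_starProjection_single_left {y : EuclideanSpace ℝ ι} (hy : y ∈ V) (j : ι) :
    ⟪V.starProjection (EuclideanSpace.single j 1), y⟫ = y j := by
  rw [inner_starProjection_left_eq_right, starProjection_eq_self_iff.mpr hy,
    EuclideanSpace.inner_single_left, map_one, one_mul]

theorem sq_apply_le_leverage_mul_norm_sq {y : EuclideanSpace ℝ ι} (hy : y ∈ V) (j : ι) :
    y j ^ 2 ≤ V.leverage j * ‖y‖ ^ 2 := by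
  rw [← inner_starProjection_single_left hy, ← sq_abs, leverage, ← mul_pow]
  gcongr
  exact abs_real_inner_le_norm _ _

variable (V)

theorem starProjection_single_apply_self (j : ι) :
    V.starProjection (EuclideanSpace.single j 1) j = V.leverage j := by
  rw [← inner_starProjection_single_left (V.starProjection_apply_mem _), leverage,
    real_inner_self_eq_norm_sq]

theorem sum_leverage : ∑ j, V.leverage j = Module.finrank ℝ V := by
  have hproj : LinearMap.IsProj V (V.starProjection : EuclideanSpace ℝ ι →ₗ[ℝ] _) :=
    ⟨V.starProjection_apply_mem, fun _ hx => starProjection_eq_self_iff.mpr hx⟩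
  rw [← hproj.trace, LinearMap.trace_eq_sum_inner _ (EuclideanSpace.basisFun ι ℝ)]
  refine Finset.sum_congr rfl fun j _ => ?_
  rw [EuclideanSpace.basisFun_apply, ContinuousLinearMap.coe_coe, EuclideanSpace.inner_single_left,
    map_one, one_mul, starProjection_single_apply_self]

theorem leverage_nonneg (j : ι) : 0 ≤ V.leverage j := by
  unfold leverage
  positivity

theorem leverage_eq_zero_iff (j : ι) :
    V.leverage j = 0 ↔ V.starProjection (EuclideanSpace.single j 1) = 0 := by
  rw [leverage, sq_eq_zero_iff, norm_eq_zero]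

theorem sq_starProjection_single_apply_self (j : ι) :
    V.starProjection (EuclideanSpace.single j 1) j ^ 2 =
      V.leverage j * ‖V.starProjection (EuclideanSpace.single j 1)‖ ^ 2 := by
  rw [starProjection_single_apply_self, sq]
  rfl

theorem sSup_sq_apply_div_norm_sq_eq_leverage (j : ι) :
    sSup {x : ℝ | ∃ y ∈ V, y ≠ 0 ∧ x = y j ^ 2 / ‖y‖ ^ 2} = V.leverage j := by
  have hbound : ∀ x ∈ {x : ℝ | ∃ y ∈ V, y ≠ 0 ∧ x = y j ^ 2 / ‖y‖ ^ 2}, x ≤ V.leverage j := by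
    rintro _ ⟨y, hy, hy0, rfl⟩
    rw [div_le_iff₀ (by positivity)]
    exact sq_apply_le_leverage_mul_norm_sq hy j
  refine le_antisymm (Real.sSup_le hbound (V.leverage_nonneg j)) ?_
  by_cases hu : V.starProjection (EuclideanSpace.single j 1) = 0
  · -- every ratio vanishes, and if there are none at all then `sSup ∅ = 0`
    rw [(V.leverage_eq_zero_iff j).mpr hu]
    exact Real.sSup_nonneg fun _ ⟨_, _, _, hx⟩ => hx ▸ by positivity
  · refine le_csSup ⟨_, hbound⟩ ⟨_, V.starProjection_apply_mem _, hu, ?_⟩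
    rw [sq_starProjection_single_apply_self,
      mul_div_cancel_right₀ _ (pow_ne_zero _ (norm_ne_zero_iff.mpr hu))]

theorem exists_mul_norm_sq_le_sq_apply_iff {ε : ℝ} (hε : 0 < ε) (j : ι) :
    (∃ y ∈ V, y ≠ 0 ∧ ε * ‖y‖ ^ 2 ≤ y j ^ 2) ↔ ε ≤ V.leverage j := by
  constructor
  · rintro ⟨y, hy, hy0, hle⟩
    exact le_of_mul_le_mul_right (hle.trans (sq_apply_le_leverage_mul_norm_sq hy j))
      (by positivity)
  · intro hj
    have hu : V.starProjection (EuclideanSpace.single j 1) ≠ 0 :=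
      fun hu => hε.not_ge (hj.trans ((V.leverage_eq_zero_iff j).mpr hu).le)
    refine ⟨_, V.starProjection_apply_mem _, hu, ?_⟩
    rw [sq_starProjection_single_apply_self]
    gcongr

theorem ncard_setOf_le_leverage_le {ε : ℝ} (hε : 0 < ε) :
    ({j | ε ≤ V.leverage j}.ncard : ℝ) ≤ Module.finrank ℝ V / ε := by
  classical
  rw [le_div_iff₀ hε, ← sum_leverage, Set.ncard_eq_toFinset_card', Set.toFinset_ofPred,
    ← nsmul_eq_mul]
  calc _ ≤ ∑ j ∈ Finset.univ.filter (ε ≤ V.leverage ·), V.leverage j :=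
        Finset.card_nsmul_le_sum _ _ _ fun j hj => (Finset.mem_filter.mp hj).2
    _ ≤ ∑ j, V.leverage j :=
        Finset.sum_le_sum_of_subset_of_nonneg (Finset.subset_univ _)
          fun j _ _ => V.leverage_nonneg j

end Submodule

theorem Matrix.exists_mulVec_ne_zero_and_iff {m n : Type*} [Fintype n] [DecidableEq n]
    (K : Matrix m n ℝ) (P : (m → ℝ) → Prop) :
    (∃ v, K.mulVec v ≠ 0 ∧ P (K.mulVec v)) ↔
      ∃ y ∈ LinearMap.range K.toEuclideanLin, y ≠ 0 ∧ P (WithLp.ofLp y) := by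
  constructor
  · rintro ⟨v, hv, hP⟩
    exact ⟨_, ⟨WithLp.toLp 2 v, rfl⟩, fun h => hv congr(WithLp.ofLp $h), hP⟩
  · rintro ⟨_, ⟨v, rfl⟩, hy, hP⟩
    exact ⟨WithLp.ofLp v, fun h => hy congr(WithLp.toLp 2 $h), hP⟩

section

variable {n d : ℕ} (K : Matrix (Fin n) (Fin d) ℝ)

theorem mem_USet_iff (ε : ℝ) (j : Fin n) :
    j ∈ USet K ε ↔
      ∃ y ∈ LinearMap.range K.toEuclideanLin, y ≠ 0 ∧ ε * ‖y‖ ^ 2 ≤ y j ^ 2 := by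
  simp only [USet, LA, Set.mem_iUnion₂, Set.mem_ofPred_eq, exists_prop,
    EuclideanSpace.real_norm_sq_eq]
  exact K.exists_mulVec_ne_zero_and_iff fun w => ε * ∑ ℓ, w ℓ ^ 2 ≤ w j ^ 2

theorem levScore_eq_leverage (j : Fin n) :
    levScore K j = (LinearMap.range K.toEuclideanLin).leverage j := by
  rw [← Submodule.sSup_sq_apply_div_norm_sq_eq_leverage, levScore]
  congr 1
  ext x
  simp only [Set.mem_ofPred_eq, EuclideanSpace.real_norm_sq_eq]
  exact K.exists_mulVec_ne_zero_and_iff fun w => x = w j ^ 2 / ∑ ℓ, w ℓ ^ 2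

end

/-- `U(K, ε)` equals the set of rows whose leverage score is at least `ε`, and
`|U(K, ε)| ≤ d/ε`. -/
theorem USet_eq_large_leverage_and_card_le {n d : ℕ} (K : Matrix (Fin n) (Fin d) ℝ)
    (ε : ℝ) (hε : 0 < ε) :
    USet K ε = {j : Fin n | ε ≤ levScore K j} ∧
      ((USet K ε).ncard : ℝ) ≤ d / ε := by
  set V := LinearMap.range K.toEuclideanLin
  have hU : USet K ε = {j | ε ≤ V.leverage j} :=
    Set.ext fun j => (mem_USet_iff K ε j).trans (V.exists_mul_norm_sq_le_sq_apply_iff hε j)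
  have hdim : (Module.finrank ℝ V : ℝ) ≤ d := by
    exact_mod_cast (LinearMap.finrank_range_le _).trans_eq finrank_euclideanSpace_fin
  simp only [levScore_eq_leverage]
  refine ⟨hU, ?_⟩
  rw [hU]
  exact (V.ncard_setOf_le_leverage_le hε).trans (by gcongr)
end

section
/- Let 1 ≤ p < ∞, let K be an n×d real matrix with rows K_1,…,K_n, and let ε > 0. Then the set S = { i ∈ {1,…,n} : σ^{(p)}_i(K) ≥ ε } of rows whose ℓ_p-sensitivity is at least ε satisfies |S| ≤ d/ε when 1 ≤ p ≤ 2, and |S| ≤ d^{p/2}/ε when p > 2. -/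
/-!
For each row `i` with `σ_i ≥ ε` pick a test vector `v_i` with `∑_ℓ |(K v_i)_ℓ|^p = 1` and
`|(K v_i)_i|^p > θ σ_i`, and put `N i l = (K v_i)_l / (K v_l)_l`. This matrix has unit diagonal,
factors through `ℝ^d` (so `rank N ≤ d`), and the definition of sensitivity gives
`|N i l|^p ≤ σ_l / (θ σ_l) = θ⁻¹` and `∑_l |N i l|^p ≤ (θ ε)⁻¹`. For a unit-diagonal matrix of
size `m`, `m² = (tr N)² ≤ rank N · ∑ N_{il}²`; the Frobenius norm is bounded by interpolating
between the entry and row bounds when `p ≤ 2`, and by the power-mean inequality when `p ≥ 2`.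
Letting `θ → 1` gives the two estimates.
-/

/-- The `ℓ_p`-sensitivity of row `j` of an `n × d` real matrix `K`:
`σ^{(p)}_j(K) = sup { |⟨K_j, v⟩|^p / ∑_ℓ |⟨K_ℓ, v⟩|^p : v ∈ ℝ^d, Kv ≠ 0 }`. -/
noncomputable def lpSens {n d : ℕ} (p : ℝ) (K : Matrix (Fin n) (Fin d) ℝ) (j : Fin n) : ℝ :=
  sSup {x : ℝ | ∃ v : Fin d → ℝ, K.mulVec v ≠ 0 ∧
    x = |∑ i, K j i * v i| ^ p / ∑ ℓ, |∑ i, K ℓ i * v i| ^ p}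

open Finset Module Matrix Filter Topology
open scoped InnerProductSpace

theorem Submodule.sq_sum_inner_le_finrank_mul {ι E : Type*} [Fintype ι] [NormedAddCommGroup E]
    [InnerProductSpace ℝ E] (U : Submodule ℝ E) [FiniteDimensional ℝ U] {e : ι → E}
    (he : Orthonormal ℝ e) (y : ι → U) :
    (∑ i, ⟪e i, (y i : E)⟫_ℝ) ^ 2 ≤ finrank ℝ U * ∑ i, ‖y i‖ ^ 2 := by
  let b := stdOrthonormalBasis ℝ U
  have hexpand (i : ι) : ⟪e i, (y i : E)⟫_ℝ = ∑ j, ⟪e i, (b j : E)⟫_ℝ * ⟪b j, y i⟫_ℝ := by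
    conv_lhs => rw [← b.sum_repr' (y i)]
    simp [inner_sum, inner_smul_right, mul_comm]
  have hparseval : ∀ i, ∑ j, ⟪b j, y i⟫_ℝ ^ 2 = ‖y i‖ ^ 2 := by
    intro i
    rw [← real_inner_self_eq_norm_sq, ← b.sum_inner_mul_inner]
    simp [sq, real_inner_comm]
  have hbessel : ∀ j, ∑ i, ⟪e i, (b j : E)⟫_ℝ ^ 2 ≤ 1 := by
    intro j
    have hb : ‖(b j : E)‖ = 1 := b.orthonormal.1 j
    simpa [hb] using he.sum_inner_products_le (s := univ) (b j : E)
  calc (∑ i, ⟪e i, (y i : E)⟫_ℝ) ^ 2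
      = (∑ ij : ι × Fin (finrank ℝ U),
          ⟪e ij.1, (b ij.2 : E)⟫_ℝ * ⟪b ij.2, y ij.1⟫_ℝ) ^ 2 := by
        simp_rw [hexpand, Fintype.sum_prod_type]
    _ ≤ (∑ ij : ι × Fin (finrank ℝ U), ⟪e ij.1, (b ij.2 : E)⟫_ℝ ^ 2) *
          ∑ ij : ι × Fin (finrank ℝ U), ⟪b ij.2, y ij.1⟫_ℝ ^ 2 :=
        sum_mul_sq_le_sq_mul_sq _ _ _
    _ ≤ finrank ℝ U * ∑ i, ‖y i‖ ^ 2 := by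
        rw [Fintype.sum_prod_type, Fintype.sum_prod_type, sum_comm]
        simp_rw [hparseval]
        gcongr
        simpa using sum_le_sum fun j (_ : j ∈ univ) => hbessel j

theorem Matrix.trace_sq_le_rank_mul_sum_sq {ι : Type*} [Fintype ι] [DecidableEq ι]
    (N : Matrix ι ι ℝ) : N.trace ^ 2 ≤ N.rank * ∑ i, ∑ j, N i j ^ 2 := by
  let U := (LinearMap.range N.mulVecLin).map
    ((WithLp.linearEquiv 2 ℝ (ι → ℝ)).symm : (ι → ℝ) →ₗ[ℝ] EuclideanSpace ℝ ι)
  have hU : finrank ℝ U = N.rank := LinearEquiv.finrank_map_eq _ _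
  let col : ι → U := fun j =>
    ⟨WithLp.toLp 2 (N *ᵥ Pi.single j 1),
      Submodule.mem_map_of_mem (LinearMap.mem_range_self _ _)⟩
  have := U.sq_sum_inner_le_finrank_mul (EuclideanSpace.basisFun ι ℝ).orthonormal col
  simpa [hU, col, Matrix.trace, EuclideanSpace.real_norm_sq_eq, Submodule.coe_norm,
    EuclideanSpace.inner_single_left, sum_comm (f := fun i j => N i j ^ 2)] using this

theorem sq_le_rpow_mul_abs_rpow {x A p : ℝ} (hp0 : 0 < p) (hp2 : p ≤ 2) (hx : |x| ^ p ≤ A) :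
    x ^ 2 ≤ A ^ (2 / p - 1) * |x| ^ p := by
  have hq : 0 ≤ 2 / p - 1 := by rw [sub_nonneg, le_div_iff₀ hp0]; linarith
  calc x ^ 2 = (|x| ^ p) ^ (2 / p - 1 + 1) := by
        rw [← Real.rpow_mul (abs_nonneg x), sub_add_cancel, mul_div_cancel₀ _ hp0.ne',
          ← sq_abs]
        norm_cast
    _ = (|x| ^ p) ^ (2 / p - 1) * |x| ^ p := by
        rw [Real.rpow_add' (by positivity) (by simp [hp0.ne']), Real.rpow_one]
    _ ≤ A ^ (2 / p - 1) * |x| ^ p := by gcongr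

theorem Matrix.card_sq_le_rank_mul_sum_sq {ι : Type*} [Fintype ι] [DecidableEq ι]
    {N : Matrix ι ι ℝ} (hdiag : ∀ i, N i i = 1) :
    (Fintype.card ι : ℝ) ^ 2 ≤ N.rank * ∑ i, ∑ j, N i j ^ 2 := by
  simpa [Matrix.trace, hdiag] using N.trace_sq_le_rank_mul_sum_sq

theorem Matrix.card_le_rank_mul_of_abs_rpow_le {ι : Type*} [Fintype ι] [DecidableEq ι]
    {N : Matrix ι ι ℝ} {p A B : ℝ} (hp0 : 0 < p) (hp2 : p ≤ 2) (hdiag : ∀ i, N i i = 1)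
    (hentry : ∀ i j, |N i j| ^ p ≤ A) (hrow : ∀ i, ∑ j, |N i j| ^ p ≤ B) :
    (Fintype.card ι : ℝ) ≤ N.rank * A ^ (2 / p - 1) * B := by
  rcases isEmpty_or_nonempty ι with hι | hι
  · simp [Subsingleton.elim N 0]
  set m : ℝ := (Fintype.card ι : ℝ)
  have hm : 0 < m := by simpa [m] using Fintype.card_pos
  have hA : 0 ≤ A := (Real.rpow_nonneg (abs_nonneg _) p).trans (hentry hι.some hι.some)
  have hfrob : ∑ i, ∑ j, N i j ^ 2 ≤ m * (A ^ (2 / p - 1) * B) := by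
    calc ∑ i, ∑ j, N i j ^ 2 ≤ ∑ i, A ^ (2 / p - 1) * ∑ j, |N i j| ^ p := by
          gcongr with i
          rw [mul_sum]
          gcongr with j
          exact sq_le_rpow_mul_abs_rpow hp0 hp2 (hentry i j)
      _ ≤ ∑ _i : ι, A ^ (2 / p - 1) * B := by gcongr with i; exact hrow i
      _ = m * (A ^ (2 / p - 1) * B) := by simp [m]
  refine le_of_mul_le_mul_left ?_ hm
  calc m * m ≤ N.rank * ∑ i, ∑ j, N i j ^ 2 := by
        simpa [sq] using Matrix.card_sq_le_rank_mul_sum_sq hdiag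
    _ ≤ N.rank * (m * (A ^ (2 / p - 1) * B)) := by gcongr
    _ = m * (N.rank * A ^ (2 / p - 1) * B) := by ring

theorem Matrix.card_le_rank_rpow_mul_of_two_le {ι : Type*} [Fintype ι] [DecidableEq ι]
    {N : Matrix ι ι ℝ} {p B : ℝ} (hp : 2 ≤ p) (hdiag : ∀ i, N i i = 1)
    (hrow : ∀ i, ∑ j, |N i j| ^ p ≤ B) :
    (Fintype.card ι : ℝ) ≤ (N.rank : ℝ) ^ (p / 2) * B := by
  rcases isEmpty_or_nonempty ι with hι | hι
  · simp [Subsingleton.elim N 0, Real.zero_rpow (by positivity : p / 2 ≠ 0)]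
  set m : ℝ := (Fintype.card ι : ℝ)
  have hm : 0 < m := by simpa [m] using Fintype.card_pos
  have hpow : ∀ x : ℝ, (x ^ 2) ^ (p / 2) = |x| ^ p := fun x => by
    rw [← sq_abs, ← Real.rpow_natCast, ← Real.rpow_mul (abs_nonneg x)]
    ring_nf
  have hholder : (∑ i, ∑ j, N i j ^ 2) ^ (p / 2) ≤ (m ^ 2) ^ (p / 2 - 1) * (m * B) := by
    have := Real.rpow_sum_le_const_mul_sum_rpow univ (fun ij : ι × ι => N ij.1 ij.2 ^ 2)
      (by linarith : 1 ≤ p / 2)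
    simp only [Fintype.sum_prod_type, abs_sq, hpow, card_univ, Fintype.card_prod] at this
    refine this.trans ?_
    push_cast
    rw [← sq]
    gcongr
    calc ∑ i, ∑ j, |N i j| ^ p ≤ ∑ _i : ι, B := sum_le_sum fun i _ => hrow i
      _ = m * B := by simp [m]
  have key : (m ^ 2) ^ (p / 2 - 1) * (m * m) ≤
      (m ^ 2) ^ (p / 2 - 1) * (m * (N.rank ^ (p / 2) * B)) := by
    calc (m ^ 2) ^ (p / 2 - 1) * (m * m) = (m ^ 2) ^ (p / 2) := by
          rw [← sq, ← Real.rpow_add_one (by positivity), sub_add_cancel]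
      _ ≤ (N.rank * ∑ i, ∑ j, N i j ^ 2) ^ (p / 2) := by
          gcongr
          exact Matrix.card_sq_le_rank_mul_sum_sq hdiag
      _ = N.rank ^ (p / 2) * (∑ i, ∑ j, N i j ^ 2) ^ (p / 2) :=
          Real.mul_rpow (by positivity) (by positivity)
      _ ≤ N.rank ^ (p / 2) * ((m ^ 2) ^ (p / 2 - 1) * (m * B)) := by gcongr
      _ = (m ^ 2) ^ (p / 2 - 1) * (m * (N.rank ^ (p / 2) * B)) := by ring
  exact le_of_mul_le_mul_left (le_of_mul_le_mul_left key (by positivity)) hm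

theorem le_of_forall_rpow_mul_le {x y q : ℝ} (h : ∀ θ, 0 < θ → θ < 1 → θ ^ q * x ≤ y) :
    x ≤ y := by
  have hlim : Tendsto (fun θ : ℝ => θ ^ q * x) (𝓝[<] 1) (𝓝 x) := by
    simpa using ((Real.continuousAt_rpow_const 1 q (Or.inl one_ne_zero)).tendsto.mul_const
      x).mono_left nhdsWithin_le_nhds
  refine le_of_tendsto hlim ?_
  filter_upwards [Ioo_mem_nhdsLT zero_lt_one] with θ hθ using h θ hθ.1 hθ.2

noncomputable def crossEvalMatrix {ι κ : Type*} [Fintype κ] (A : Matrix ι κ ℝ)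
    (v : ι → κ → ℝ) : Matrix ι ι ℝ :=
  fun i l => (A *ᵥ v i) l / (A *ᵥ v l) l

theorem rank_crossEvalMatrix_le {ι κ : Type*} [Fintype ι] [Fintype κ] [DecidableEq ι]
    (A : Matrix ι κ ℝ) (v : ι → κ → ℝ) :
    (crossEvalMatrix A v).rank ≤ Fintype.card κ := by
  have hfactor : crossEvalMatrix A v =
      Matrix.of v * (Aᵀ * diagonal fun l => ((A *ᵥ v l) l)⁻¹) := by
    ext i l
    rw [mul_apply]
    simp only [crossEvalMatrix, mul_diagonal, transpose_apply, of_apply, mulVec, dotProduct,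
      div_eq_mul_inv, sum_mul]
    exact sum_congr rfl fun k _ => by ring
  rw [hfactor]
  exact (rank_mul_le_left _ _).trans (rank_le_card_width _)

section lpSens

variable {n d : ℕ} {p : ℝ} {K : Matrix (Fin n) (Fin d) ℝ}

theorem abs_mulVec_rpow_div_le_lpSens {v : Fin d → ℝ} (hv : K *ᵥ v ≠ 0) (j : Fin n) :
    |(K *ᵥ v) j| ^ p / ∑ ℓ, |(K *ᵥ v) ℓ| ^ p ≤ lpSens p K j := by
  refine le_csSup ⟨1, ?_⟩ ⟨v, hv, rfl⟩
  rintro _ ⟨w, -, rfl⟩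
  exact div_le_one_of_le₀
    (single_le_sum (f := fun ℓ => |(K *ᵥ w) ℓ| ^ p) (fun ℓ _ => by positivity) (mem_univ j))
    (sum_nonneg fun ℓ _ => by positivity)

theorem abs_mulVec_rpow_le_lpSens (hp : 0 < p) {v : Fin d → ℝ}
    (hv : ∑ ℓ, |(K *ᵥ v) ℓ| ^ p = 1) (j : Fin n) :
    |(K *ᵥ v) j| ^ p ≤ lpSens p K j := by
  have hKv : K *ᵥ v ≠ 0 := by
    rintro h
    simp [h, Real.zero_rpow hp.ne'] at hv
  simpa [hv] using abs_mulVec_rpow_div_le_lpSens (p := p) hKv j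

theorem exists_sum_abs_mulVec_rpow_eq_one_lt (hp : 0 < p) {x : ℝ} {j : Fin n} (hx0 : 0 ≤ x)
    (hx : x < lpSens p K j) :
    ∃ v : Fin d → ℝ, ∑ ℓ, |(K *ᵥ v) ℓ| ^ p = 1 ∧ x < |(K *ᵥ v) j| ^ p := by
  have hne : {x : ℝ | ∃ v : Fin d → ℝ, K *ᵥ v ≠ 0 ∧
      x = |(K *ᵥ v) j| ^ p / ∑ ℓ, |(K *ᵥ v) ℓ| ^ p}.Nonempty := by
    by_contra h
    rw [Set.not_nonempty_iff_eq_empty] at h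
    simp only [lpSens, mulVec, dotProduct] at hx h
    rw [h, Real.sSup_empty] at hx
    linarith
  obtain ⟨_, ⟨v, hv, rfl⟩, hlt⟩ := exists_lt_of_lt_csSup hne hx
  set D := ∑ ℓ, |(K *ᵥ v) ℓ| ^ p
  have hD : 0 < D := by
    obtain ⟨ℓ, hℓ⟩ := Function.ne_iff.mp hv
    exact sum_pos' (fun _ _ => by positivity)
      ⟨ℓ, mem_univ ℓ, Real.rpow_pos_of_pos (abs_pos.mpr hℓ) p⟩
  have hscale (ℓ : Fin n) : |(K *ᵥ (D ^ (-p⁻¹) • v)) ℓ| ^ p = D⁻¹ * |(K *ᵥ v) ℓ| ^ p := by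
    rw [mulVec_smul, Pi.smul_apply, smul_eq_mul, abs_mul, Real.mul_rpow (abs_nonneg _)
      (abs_nonneg _), abs_of_pos (by positivity), ← Real.rpow_mul hD.le, neg_mul,
      inv_mul_cancel₀ hp.ne', Real.rpow_neg_one]
  refine ⟨D ^ (-p⁻¹) • v, ?_, ?_⟩
  · simp_rw [hscale, ← mul_sum]
    exact inv_mul_cancel₀ hD.ne'
  · rwa [hscale, inv_mul_eq_div]

theorem exists_matrix_rank_le_of_le_lpSens (hp : 0 < p) {ε θ : ℝ} (hε : 0 < ε) (hθ0 : 0 < θ)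
    (hθ1 : θ < 1) (F : Finset (Fin n)) (hF : ∀ i ∈ F, ε ≤ lpSens p K i) :
    ∃ N : Matrix F F ℝ, (∀ i, N i i = 1) ∧ N.rank ≤ d ∧
      (∀ i j, |N i j| ^ p ≤ θ⁻¹) ∧ ∀ i, ∑ j, |N i j| ^ p ≤ (θ * ε)⁻¹ := by
  have hσ : ∀ i : F, θ * lpSens p K i < lpSens p K i := fun i =>
    mul_lt_of_lt_one_left (hε.trans_le (hF i i.2)) hθ1
  choose v hv1 hv2 using fun i : F =>
    exists_sum_abs_mulVec_rpow_eq_one_lt hp (mul_nonneg hθ0.le (hε.le.trans (hF i i.2)))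
      (hσ i)
  have hdiag : ∀ l : F, θ * ε < |(K *ᵥ v l) l| ^ p := fun l =>
    (mul_le_mul_of_nonneg_left (hF l l.2) hθ0.le).trans_lt (hv2 l)
  have hdiag_pos : ∀ l : F, 0 < |(K *ᵥ v l) l| ^ p := fun l =>
    (mul_pos hθ0 hε).trans (hdiag l)
  have hdiag_ne : ∀ l : F, (K *ᵥ v l) l ≠ 0 := fun l h => by
    simpa [h, Real.zero_rpow hp.ne'] using hdiag_pos l
  let A : Matrix F (Fin d) ℝ := K.submatrix (↑) id
  have hN : ∀ i l, |crossEvalMatrix A v i l| ^ p =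
      |(K *ᵥ v i) l| ^ p / |(K *ᵥ v l) l| ^ p := fun i l => by
    rw [crossEvalMatrix, abs_div, Real.div_rpow (abs_nonneg _) (abs_nonneg _)]
    rfl
  refine ⟨crossEvalMatrix A v, fun i => div_self (hdiag_ne i),
    by simpa using rank_crossEvalMatrix_le A v, fun i l => ?_, fun i => ?_⟩
  · rw [hN, div_le_iff₀ (hdiag_pos l)]
    calc |(K *ᵥ v i) l| ^ p ≤ lpSens p K l := abs_mulVec_rpow_le_lpSens hp (hv1 i) l
      _ ≤ θ⁻¹ * |(K *ᵥ v l) l| ^ p := by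
          rw [le_inv_mul_iff₀ hθ0]
          exact (hv2 l).le
  · calc ∑ l, |crossEvalMatrix A v i l| ^ p
        ≤ ∑ l : F, (θ * ε)⁻¹ * |(K *ᵥ v i) l| ^ p := by
          gcongr with l
          rw [hN, div_eq_inv_mul]
          gcongr
          exact (hdiag l).le
      _ ≤ (θ * ε)⁻¹ * ∑ l, |(K *ᵥ v i) l| ^ p := by
          rw [← mul_sum, sum_coe_sort F fun l => |(K *ᵥ v i) l| ^ p]
          gcongr
          exact subset_univ F
      _ = (θ * ε)⁻¹ := by rw [hv1 i, mul_one]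

end lpSens

/-- The set of rows with `ℓ_p`-sensitivity at least `ε` has size at most `d/ε` if `1 ≤ p ≤ 2`,
and at most `d^{p/2}/ε` if `p > 2`. -/
theorem card_large_lpSens_le {n d : ℕ} (p : ℝ) (hp : 1 ≤ p)
    (K : Matrix (Fin n) (Fin d) ℝ) (ε : ℝ) (hε : 0 < ε) :
    (p ≤ 2 →
      ((Finset.univ.filter fun i : Fin n => ε ≤ lpSens p K i).card : ℝ) ≤ (d : ℝ) / ε) ∧
    (2 < p →
      ((Finset.univ.filter fun i : Fin n => ε ≤ lpSens p K i).card : ℝ) ≤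
        (d : ℝ) ^ (p / 2) / ε) := by
  set F := univ.filter fun i : Fin n => ε ≤ lpSens p K i
  have hp0 : 0 < p := zero_lt_one.trans_le hp
  have hF : ∀ i ∈ F, ε ≤ lpSens p K i := fun i hi => (mem_filter.mp hi).2
  refine ⟨fun hp2 => le_of_forall_rpow_mul_le (q := 2 / p) fun θ hθ0 hθ1 => ?_,
    fun hp2 => le_of_forall_rpow_mul_le (q := 1) fun θ hθ0 hθ1 => ?_⟩
  all_goals
    obtain ⟨N, hdiag, hrank, hentry, hrow⟩ :=
      exists_matrix_rank_le_of_le_lpSens hp0 hε hθ0 hθ1 F hF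
  · have hcard := N.card_le_rank_mul_of_abs_rpow_le hp0 hp2 hdiag hentry hrow
    rw [Fintype.card_coe] at hcard
    calc θ ^ (2 / p) * F.card ≤ θ ^ (2 / p) * (d * θ⁻¹ ^ (2 / p - 1) * (θ * ε)⁻¹) := by
          gcongr
          exact hcard.trans (by gcongr)
      _ = d / ε := by
          rw [Real.inv_rpow hθ0.le, Real.rpow_sub hθ0, Real.rpow_one]
          field_simp
  · have hcard := N.card_le_rank_rpow_mul_of_two_le hp2.le hdiag hrow
    rw [Fintype.card_coe] at hcard
    calc θ ^ (1 : ℝ) * F.card ≤ θ * (d ^ (p / 2) * (θ * ε)⁻¹) := by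
          rw [Real.rpow_one]
          gcongr
          exact hcard.trans (by gcongr)
      _ = d ^ (p / 2) / ε := by field_simp
end

section
/- Let K be an n×d real matrix with rows K_1,…,K_n, let S ⊆ {1,…,n}, and let 0 < δ₂ ≤ δ₁ ≤ 1/4 be real numbers. Assume that for all distinct j, ℓ ∈ S, |⟨K_j, K_ℓ⟩| ≤ δ₁ · min(‖K_j‖₂², ‖K_ℓ‖₂²), and for all j ∈ S and ℓ ∉ S, |⟨K_ℓ, K_j⟩| ≤ δ₂ · min(‖K_j‖₂², ‖K_ℓ‖₂²). Let A = KKᵀ. Then for every i ∈ S, (A_{ii})² ≥ (Σ_{j=1}^n (A_{ij})²) · 1/(1 + δ₁²|S| + δ₂² n). -/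
open Matrix

/-- If `S` is a set of rows of `K` whose pairwise correlations within `S` are bounded by `δ₁`
and whose correlations to rows outside `S` are bounded by `δ₂`, then every `i ∈ S` has large
self-attention in the Gram matrix `A = KKᵀ`:
`(A_{ii})² ≥ (∑_j (A_{ij})²) / (1 + δ₁²|S| + δ₂²n)`. -/
theorem self_attention_large {n d : ℕ} (K : Matrix (Fin n) (Fin d) ℝ) (S : Finset (Fin n))
    (δ₁ δ₂ : ℝ) (hδ₂ : 0 < δ₂) (hδ₂₁ : δ₂ ≤ δ₁) (hδ₁ : δ₁ ≤ 1 / 4)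
    (hSS : ∀ j ∈ S, ∀ ℓ ∈ S, j ≠ ℓ →
      |∑ i, K j i * K ℓ i| ≤ δ₁ * min (∑ i, K j i ^ 2) (∑ i, K ℓ i ^ 2))
    (hSc : ∀ j ∈ S, ∀ ℓ, ℓ ∉ S →
      |∑ i, K ℓ i * K j i| ≤ δ₂ * min (∑ i, K j i ^ 2) (∑ i, K ℓ i ^ 2)) :
    ∀ i ∈ S,
      (∑ j, ((K * Kᵀ) i j) ^ 2) * (1 / (1 + δ₁ ^ 2 * S.card + δ₂ ^ 2 * n)) ≤
        ((K * Kᵀ) i i) ^ 2 := by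
  intro i hi
  have hδ₁0 : 0 ≤ δ₁ := hδ₂.le.trans hδ₂₁
  set a : ℝ := ∑ k, K i k ^ 2 with ha
  have ha0 : 0 ≤ a := Finset.sum_nonneg fun k _ => sq_nonneg _
  have hAii : (K * Kᵀ) i i = a := by
    simp [Matrix.mul_apply, Matrix.transpose_apply, sq, ha]
  have hD : (0:ℝ) < 1 + δ₁ ^ 2 * S.card + δ₂ ^ 2 * n := by positivity
  rw [hAii, mul_one_div, div_le_iff₀ hD]
  have hbound : ∀ j, j ≠ i → ((K * Kᵀ) i j) ^ 2 ≤ (if j ∈ S then δ₁ ^ 2 else δ₂ ^ 2) * a ^ 2 := by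
    intro j hj
    have hAij : (K * Kᵀ) i j = ∑ k, K i k * K j k := by
      simp [Matrix.mul_apply, Matrix.transpose_apply]
    by_cases hjS : j ∈ S
    · have h1 := hSS i hi j hjS hj.symm
      have h2 : |(K * Kᵀ) i j| ≤ δ₁ * a := by
        rw [hAij]
        exact h1.trans (mul_le_mul_of_nonneg_left (min_le_left _ _) hδ₁0)
      have := mul_self_le_mul_self (abs_nonneg ((K * Kᵀ) i j)) h2
      simp only [hjS, if_true]
      nlinarith [sq_abs ((K * Kᵀ) i j)]
    · have h1 := hSc i hi j hjS
      have h2 : |(K * Kᵀ) i j| ≤ δ₂ * a := by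
        rw [hAij]
        have : (∑ k, K i k * K j k) = ∑ k, K j k * K i k := by
          apply Finset.sum_congr rfl; intro k _; ring
        rw [this]
        exact h1.trans (mul_le_mul_of_nonneg_left (min_le_left _ _) hδ₂.le)
      have := mul_self_le_mul_self (abs_nonneg ((K * Kᵀ) i j)) h2
      simp only [hjS, if_false]
      nlinarith [sq_abs ((K * Kᵀ) i j)]
  have hsplit : (∑ j, ((K * Kᵀ) i j) ^ 2)
      = ((K * Kᵀ) i i) ^ 2 + ∑ j ∈ Finset.univ.erase i, ((K * Kᵀ) i j) ^ 2 :=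
    (Finset.add_sum_erase _ _ (Finset.mem_univ i)).symm
  have h3 : ∑ j ∈ Finset.univ.erase i, ((K * Kᵀ) i j) ^ 2
      ≤ ∑ j ∈ Finset.univ.erase i, (if j ∈ S then δ₁ ^ 2 else δ₂ ^ 2) * a ^ 2 := by
    apply Finset.sum_le_sum
    intro j hj
    exact hbound j (Finset.ne_of_mem_erase hj)
  have h4 : ∑ j ∈ Finset.univ.erase i, (if j ∈ S then δ₁ ^ 2 else δ₂ ^ 2) * a ^ 2
      ≤ ∑ j : Fin n, (if j ∈ S then δ₁ ^ 2 else δ₂ ^ 2) * a ^ 2 := by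
    apply Finset.sum_le_sum_of_subset_of_nonneg (Finset.erase_subset _ _)
    intro j _ _
    by_cases hjS : j ∈ S <;> simp [hjS] <;> positivity
  have h5 : (∑ j : Fin n, (if j ∈ S then δ₁ ^ 2 else δ₂ ^ 2))
      ≤ δ₁ ^ 2 * S.card + δ₂ ^ 2 * n := by
    rw [Finset.sum_ite, Finset.sum_const, Finset.sum_const]
    have h6 : (Finset.univ.filter (· ∈ S)) = S := Finset.filter_univ_mem S
    have h7 : (Finset.univ.filter (fun j => ¬ j ∈ S)).card ≤ n := by
      calc (Finset.univ.filter (fun j => ¬ j ∈ S)).card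
          ≤ (Finset.univ : Finset (Fin n)).card := Finset.card_filter_le _ _
        _ = n := by simp
    rw [h6]
    simp only [nsmul_eq_mul]
    have : ((Finset.univ.filter (fun j => ¬ j ∈ S)).card : ℝ) ≤ n := by exact_mod_cast h7
    nlinarith [sq_nonneg δ₂]
  have h8 : ∑ j ∈ Finset.univ.erase i, ((K * Kᵀ) i j) ^ 2
      ≤ (δ₁ ^ 2 * S.card + δ₂ ^ 2 * n) * a ^ 2 := by
    refine (h3.trans h4).trans ?_
    rw [← Finset.sum_mul]
    exact mul_le_mul_of_nonneg_right h5 (sq_nonneg a)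
  rw [hsplit, hAii]
  nlinarith [sq_nonneg a]
end

section
/- Let K be an n×d real matrix with rows K_1,…,K_n, let S ⊆ {1,…,n}, and let 0 < δ₂ ≤ δ₁ ≤ 1/4 be real numbers. Assume that for all distinct j, ℓ ∈ S, |⟨K_j, K_ℓ⟩| ≤ δ₁ · min(‖K_j‖₂², ‖K_ℓ‖₂²), and for all j ∈ S and ℓ ∉ S, |⟨K_ℓ, K_j⟩| ≤ δ₂ · min(‖K_j‖₂², ‖K_ℓ‖₂²). Suppose q ∈ ℝ^d can be written as q = Σ_{j ∈ S(q)} w_j K_j + z, where S(q) ⊆ S, the weights satisfy Σ_{j ∈ S(q)} w_j ≤ 1 and w_j ≥ 4δ₁ for all j ∈ S(q), and the vector z satisfies |⟨z, K_ℓ⟩| ≤ (δ₁/4)·‖K_ℓ‖₂² for all ℓ ∈ {1,…,n}. Then for every j ∈ S(q), ⟨q, K_j⟩ ≥ (11/4)·δ₁·‖K_j‖₂², and for every j ∈ {1,…,n} with j ∉ S(q), |⟨q, K_j⟩| ≤ (5/4)·δ₁·‖K_j‖₂². -/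
/-- In the planted model, if a query `q = ∑_{j ∈ S(q)} w_j K_j + z` is a noisy linear
combination of a relevant subset `S(q) ⊆ S` of keys, then `⟨q, K_j⟩ ≥ (11/4)δ₁‖K_j‖₂²` for
relevant keys `j ∈ S(q)`, while `|⟨q, K_j⟩| ≤ (5/4)δ₁‖K_j‖₂²` for all other keys. -/
theorem relevant_keys_property {n d : ℕ} (K : Matrix (Fin n) (Fin d) ℝ) (S : Finset (Fin n))
    (δ₁ δ₂ : ℝ) (hδ₂ : 0 < δ₂) (hδ₂₁ : δ₂ ≤ δ₁) (hδ₁ : δ₁ ≤ 1 / 4)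
    (hSS : ∀ j ∈ S, ∀ ℓ ∈ S, j ≠ ℓ →
      |∑ i, K j i * K ℓ i| ≤ δ₁ * min (∑ i, K j i ^ 2) (∑ i, K ℓ i ^ 2))
    (hSc : ∀ j ∈ S, ∀ ℓ, ℓ ∉ S →
      |∑ i, K ℓ i * K j i| ≤ δ₂ * min (∑ i, K j i ^ 2) (∑ i, K ℓ i ^ 2))
    (q : Fin d → ℝ) (Sq : Finset (Fin n)) (hSqS : Sq ⊆ S)
    (w : Fin n → ℝ) (z : Fin d → ℝ)
    (hw1 : ∑ j ∈ Sq, w j ≤ 1) (hw2 : ∀ j ∈ Sq, 4 * δ₁ ≤ w j)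
    (hz : ∀ ℓ : Fin n, |∑ i, z i * K ℓ i| ≤ δ₁ / 4 * ∑ i, K ℓ i ^ 2)
    (hq : ∀ i, q i = (∑ j ∈ Sq, w j * K j i) + z i) :
    (∀ j ∈ Sq, 11 / 4 * δ₁ * ∑ i, K j i ^ 2 ≤ ∑ i, q i * K j i) ∧
    (∀ j : Fin n, j ∉ Sq → |∑ i, q i * K j i| ≤ 5 / 4 * δ₁ * ∑ i, K j i ^ 2) := by
  have hδ₁0 : 0 < δ₁ := lt_of_lt_of_le hδ₂ hδ₂₁
  have hwnn : ∀ l ∈ Sq, 0 ≤ w l := fun l hl =>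
    le_trans (by positivity) (hw2 l hl)
  have hexp : ∀ j, ∑ i, q i * K j i =
      (∑ l ∈ Sq, w l * ∑ i, K l i * K j i) + ∑ i, z i * K j i := by
    intro j
    simp only [hq, add_mul, Finset.sum_add_distrib, Finset.sum_mul]
    rw [Finset.sum_comm]
    simp [Finset.mul_sum, mul_assoc]
  have hNnn : ∀ j, (0:ℝ) ≤ ∑ i, K j i ^ 2 := fun j =>
    Finset.sum_nonneg fun i _ => sq_nonneg _
  have hself : ∀ j : Fin n, ∑ i, K j i * K j i = ∑ i, K j i ^ 2 := by
    intro j; congr 1; ext i; ring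
  constructor
  · intro j hj
    set N := ∑ i, K j i ^ 2 with hN
    have key : ∑ l ∈ Sq, w l * ∑ i, K l i * K j i
        ≥ w j * N - δ₁ * N := by
      rw [← Finset.add_sum_erase _ _ hj, hself]
      have hE : |∑ l ∈ Sq.erase j, w l * ∑ i, K l i * K j i| ≤ δ₁ * N := by
        calc |∑ l ∈ Sq.erase j, w l * ∑ i, K l i * K j i|
            ≤ ∑ l ∈ Sq.erase j, |w l * ∑ i, K l i * K j i| :=
              Finset.abs_sum_le_sum_abs _ _
          _ ≤ ∑ l ∈ Sq.erase j, w l * (δ₁ * N) := by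
              apply Finset.sum_le_sum
              intro l hl
              have hlSq := Finset.mem_of_mem_erase hl
              have hln : l ≠ j := Finset.ne_of_mem_erase hl
              rw [abs_mul, abs_of_nonneg (hwnn l hlSq)]
              apply mul_le_mul_of_nonneg_left _ (hwnn l hlSq)
              calc |∑ i, K l i * K j i|
                  ≤ δ₁ * min (∑ i, K l i ^ 2) N :=
                    hSS l (hSqS hlSq) j (hSqS hj) hln
                _ ≤ δ₁ * N := by
                    apply mul_le_mul_of_nonneg_left (min_le_right _ _) hδ₁0.le
          _ = (∑ l ∈ Sq.erase j, w l) * (δ₁ * N) := by rw [Finset.sum_mul]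
          _ ≤ 1 * (δ₁ * N) := by
              apply mul_le_mul_of_nonneg_right _ (by positivity)
              calc ∑ l ∈ Sq.erase j, w l ≤ ∑ l ∈ Sq, w l :=
                    Finset.sum_le_sum_of_subset_of_nonneg (Finset.erase_subset _ _)
                      (fun l hl _ => hwnn l hl)
                _ ≤ 1 := hw1
          _ = δ₁ * N := one_mul _
      have := abs_le.mp hE
      linarith [this.1]
    have hzj := abs_le.mp (hz j)
    have hwj := hw2 j hj
    rw [hexp j]
    have hNn := hNnn j
    nlinarith [hzj.1, key]
  · intro j hj
    set N := ∑ i, K j i ^ 2 with hN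
    have hNn := hNnn j
    have hE : |∑ l ∈ Sq, w l * ∑ i, K l i * K j i| ≤ δ₁ * N := by
      calc |∑ l ∈ Sq, w l * ∑ i, K l i * K j i|
          ≤ ∑ l ∈ Sq, |w l * ∑ i, K l i * K j i| := Finset.abs_sum_le_sum_abs _ _
        _ ≤ ∑ l ∈ Sq, w l * (δ₁ * N) := by
            apply Finset.sum_le_sum
            intro l hl
            rw [abs_mul, abs_of_nonneg (hwnn l hl)]
            apply mul_le_mul_of_nonneg_left _ (hwnn l hl)
            have hln : l ≠ j := fun h => hj (h ▸ hl)
            by_cases hjS : j ∈ S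
            · calc |∑ i, K l i * K j i|
                  ≤ δ₁ * min (∑ i, K l i ^ 2) N := hSS l (hSqS hl) j hjS hln
                _ ≤ δ₁ * N := mul_le_mul_of_nonneg_left (min_le_right _ _) hδ₁0.le
            · have h := hSc l (hSqS hl) j hjS
              have hcomm : ∑ i, K j i * K l i = ∑ i, K l i * K j i := by
                congr 1; ext i; ring
              rw [hcomm] at h
              calc |∑ i, K l i * K j i|
                  ≤ δ₂ * min (∑ i, K l i ^ 2) N := h
                _ ≤ δ₁ * N := by
                    apply mul_le_mul hδ₂₁ (min_le_right _ _) _ hδ₁0.le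
                    exact le_min (hNnn l) hNn |>.trans (le_refl _) |> fun _ => (le_min (hNnn l) hNn)
        _ = (∑ l ∈ Sq, w l) * (δ₁ * N) := by rw [Finset.sum_mul]
        _ ≤ 1 * (δ₁ * N) := mul_le_mul_of_nonneg_right hw1 (by positivity)
        _ = δ₁ * N := one_mul _
    have hzj := hz j
    rw [hexp j]
    calc |(∑ l ∈ Sq, w l * ∑ i, K l i * K j i) + ∑ i, z i * K j i|
        ≤ |∑ l ∈ Sq, w l * ∑ i, K l i * K j i| + |∑ i, z i * K j i| := abs_add_le _ _
      _ ≤ δ₁ * N + δ₁ / 4 * N := add_le_add hE hzj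
      _ = 5 / 4 * δ₁ * N := by ring
end
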